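/- Let {X_n} be a decreasing sequence of nonempty compact subsets of ℂ (X_{n+1} ⊆ X_n), X = ∩ₙ X_n, and T a bounded operator on a complex Hilbert space. Then X is a spectral set for T if and only if every X_n is a spectral set for T. -/

import Mathlib

/-!
Enlarging a spectral set keeps it spectral, which gives one direction. Conversely, if every `Xₙ`
is spectral and `f = p/q` has no poles on `X = ⋂ Xₙ`, compactness puts the zeros of `q` off some
`X_N`, and from there on `sup_X |f|` is the limit of `sup_{Xₙ} |f|`: for `c` below every
`sup_{Xₙ} |f|`, the sets `Xₙ ∩ {|f| ≥ c}` are nonempty decreasing compacta, so they meet in a point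
of `X`.
-/

/-- `X ⊆ ℂ` is a spectral set for the operator `T`: `σ(T) ⊆ X` and
`‖f(T)‖ ≤ sup_{z ∈ X} |f(z)|` for every rational function `f = p/q` with poles off `X`. -/
def IsSpectralSetFor {H : Type*} [NormedAddCommGroup H] [InnerProductSpace ℂ H]
    [CompleteSpace H] (X : Set ℂ) (T : H →L[ℂ] H) : Prop :=
  spectrum ℂ T ⊆ X ∧
    ∀ p q : Polynomial ℂ, (∀ z ∈ X, Polynomial.eval z q ≠ 0) →
      ‖Polynomial.aeval T p * Ring.inverse (Polynomial.aeval T q)‖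
        ≤ sSup ((fun z => ‖Polynomial.eval z p / Polynomial.eval z q‖) '' X)

open Set

section Compactness

variable {α : Type*} [TopologicalSpace α] [T2Space α]

lemma exists_disjoint_of_disjoint_iInter {X : ℕ → Set α}
    (hcomp : ∀ n, IsCompact (X n)) (hanti : Antitone X) {C : Set α} (hC : IsClosed C)
    (hdisj : Disjoint (⋂ n, X n) C) : ∃ N, Disjoint (X N) C := by
  obtain ⟨N, hN⟩ := ((hcomp 0).inter_right hC).elim_directed_family_closed X
    (fun n => (hcomp n).isClosed) (by grind [Set.disjoint_iff_inter_eq_empty]) hanti.directed_ge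
  refine ⟨N, Set.disjoint_left.2 fun z hzN hzC => ?_⟩
  exact hN.subset ⟨⟨hanti (Nat.zero_le N) hzN, hzC⟩, hzN⟩

lemma le_sSup_image_iInter {β : Type*} [ConditionallyCompleteLinearOrder β] [TopologicalSpace β]
    [OrderClosedTopology β] {X : ℕ → Set α} (hcomp : ∀ n, IsCompact (X n))
    (hne : ∀ n, (X n).Nonempty) (hanti : Antitone X) {f : α → β} (hf : ContinuousOn f (X 0))
    {c : β} (hc : ∀ n, c ≤ sSup (f '' X n)) : c ≤ sSup (f '' ⋂ n, X n) := by
  have hfX : ∀ n, ContinuousOn f (X n) := fun n => hf.mono (hanti (Nat.zero_le n))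
  set Y : ℕ → Set α := fun n => X n ∩ f ⁻¹' Ici c
  have hYclosed : ∀ n, IsClosed (Y n) := fun n =>
    (hfX n).preimage_isClosed_of_isClosed (hcomp n).isClosed isClosed_Ici
  have hYne : ∀ n, (Y n).Nonempty := fun n => by
    obtain ⟨x, hx, hmax⟩ := (hcomp n).exists_sSup_image_eq (hne n) (hfX n)
    exact ⟨x, hx, show c ≤ f x from hmax ▸ hc n⟩
  obtain ⟨z, hz⟩ := IsCompact.nonempty_iInter_of_sequence_nonempty_isCompact_isClosed Y
    (fun n => inter_subset_inter_left _ (hanti (Nat.le_succ n))) hYne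
    ((hcomp 0).of_isClosed_subset (hYclosed 0) inter_subset_left) hYclosed
  have hzX : z ∈ ⋂ n, X n := mem_iInter.2 fun n => (mem_iInter.1 hz n).1
  have hbdd : BddAbove (f '' ⋂ n, X n) :=
    ((hcomp 0).bddAbove_image hf).mono (image_mono (iInter_subset X 0))
  exact le_trans (mem_iInter.1 hz 0).2 (le_csSup hbdd ⟨z, hzX, rfl⟩)

end Compactness

lemma continuousOn_norm_eval_div {S : Set ℂ} {p q : Polynomial ℂ}
    (hq : ∀ z ∈ S, q.eval z ≠ 0) : ContinuousOn (fun z => ‖p.eval z / q.eval z‖) S :=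
  (p.continuous.continuousOn.div q.continuous.continuousOn hq).norm

section SpectralSet

variable {H : Type*} [NormedAddCommGroup H] [InnerProductSpace ℂ H] [CompleteSpace H]
  {T : H →L[ℂ] H}

lemma IsSpectralSetFor.mono {X Y : Set ℂ} (hX : IsSpectralSetFor X T) (hXY : X ⊆ Y)
    (hY : IsCompact Y) (hXne : X.Nonempty) : IsSpectralSetFor Y T := by
  refine ⟨hX.1.trans hXY, fun p q hq => (hX.2 p q fun z hz => hq z (hXY hz)).trans ?_⟩
  exact csSup_le_csSup (hY.bddAbove_image (continuousOn_norm_eval_div hq)) (hXne.image _)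
    (image_mono hXY)

lemma isSpectralSetFor_iInter {X : ℕ → Set ℂ} (hcomp : ∀ n, IsCompact (X n))
    (hne : ∀ n, (X n).Nonempty) (hanti : Antitone X) (hX : ∀ n, IsSpectralSetFor (X n) T) :
    IsSpectralSetFor (⋂ n, X n) T := by
  refine ⟨subset_iInter fun n => (hX n).1, fun p q hq => ?_⟩
  obtain ⟨N, hN⟩ := exists_disjoint_of_disjoint_iInter hcomp hanti
    (isClosed_eq q.continuous continuous_const) (Set.disjoint_left.2 hq)
  have hqN : ∀ n, ∀ z ∈ X (n + N), q.eval z ≠ 0 := fun n z hz =>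
    Set.disjoint_left.1 hN (hanti (Nat.le_add_left N n) hz)
  rw [← hanti.iInter_nat_add N]
  exact le_sSup_image_iInter (fun n => hcomp _) (fun n => hne _)
    (fun m n hmn => hanti (Nat.add_le_add_right hmn N)) (continuousOn_norm_eval_div (hqN 0))
    fun n => (hX (n + N)).2 p q (hqN n)

end SpectralSet

/-- For a decreasing sequence of nonempty compact sets `Xₙ ⊆ ℂ` with `X = ∩ₙ Xₙ` and a
bounded operator `T` on a complex Hilbert space, `X` is a spectral set for `T` iff every
`Xₙ` is a spectral set for `T`. -/
theorem stmt19 {H : Type*} [NormedAddCommGroup H] [InnerProductSpace ℂ H] [CompleteSpace H]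
    (T : H →L[ℂ] H) (X : ℕ → Set ℂ)
    (hcomp : ∀ n, IsCompact (X n)) (hne : ∀ n, (X n).Nonempty)
    (hdec : ∀ n, X (n + 1) ⊆ X n) :
    IsSpectralSetFor (⋂ n, X n) T ↔ ∀ n, IsSpectralSetFor (X n) T := by
  have hanti : Antitone X := antitone_nat_of_succ_le hdec
  have hXne : (⋂ n, X n).Nonempty :=
    IsCompact.nonempty_iInter_of_sequence_nonempty_isCompact_isClosed X hdec hne (hcomp 0)
      fun n => (hcomp n).isClosed
  exact ⟨fun hX n => hX.mono (iInter_subset X n) (hcomp n) hXne,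
    isSpectralSetFor_iInter hcomp hne hanti⟩
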